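/- Let K₁ and K₂ be independent Kiefer processes, λ > 0, ROC: [0,1] → [0,1], and g: (0,1) → ℝ. Fix t ∈ (0,1) and define, for r_D, r_{\bar D} ∈ (0,1], W(r_D, r_{\bar D}) = (1/r_D)·[K₁(ROC(t), r_D) + λ^{1/2}·(r_D/r_{\bar D})·g(t)·K₂(t, r_{\bar D})]. Then for r_{D,1} ≤ r_{D,2} and r_{\bar D,1} ≤ r_{\bar D,2}, Cov(W(r_{D,1}, r_{\bar D,1}), W(r_{D,2}, r_{\bar D,2})) = Var(W(r_{D,2}, r_{\bar D,2})) = ROC(t)(1−ROC(t))/r_{D,2} + λ·g(t)²·t(1−t)/r_{\bar D,2}. -/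

import Mathlib

open MeasureTheory ProbabilityTheory Set

/-- A random variable is Gaussian if its law is a (possibly degenerate) real Gaussian. -/
def IsGaussianRV {Ω : Type*} [MeasurableSpace Ω] (μ : Measure Ω) (Y : Ω → ℝ) : Prop :=
  ∃ (m : ℝ) (v : NNReal), μ.map Y = gaussianReal m v

/-- A Kiefer process: a two-parameter mean-zero Gaussian process on `[0,1] × [0,∞)` with
covariance `(min t₁ t₂ − t₁t₂)·min r₁ r₂`. -/
def IsKieferProcess {Ω : Type*} [MeasurableSpace Ω] (μ : Measure Ω)
    (K : ℝ → ℝ → Ω → ℝ) : Prop :=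
  (∀ (n : ℕ) (c : Fin n → ℝ) (p : Fin n → ℝ × ℝ),
      IsGaussianRV μ (fun ω => ∑ i, c i * K (p i).1 (p i).2 ω)) ∧
  (∀ t r, t ∈ Set.Icc (0 : ℝ) 1 → 0 ≤ r → ∫ ω, K t r ω ∂μ = 0) ∧
  (∀ t₁ t₂ r₁ r₂, t₁ ∈ Set.Icc (0 : ℝ) 1 → t₂ ∈ Set.Icc (0 : ℝ) 1 → 0 ≤ r₁ → 0 ≤ r₂ →
      ∫ ω, K t₁ r₁ ω * K t₂ r₂ ω ∂μ = (min t₁ t₂ - t₁ * t₂) * min r₁ r₂)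

/-! Write `W(r, r̄) = K₁(ROC t, r)/r + √λ·g(t)·K₂(t, r̄)/r̄`. Kiefer processes are Gaussian, hence
square integrable, and by independence and centring the cross terms of the product vanish. The
Kiefer covariance of `K(s, r₁)` and `K(s, r₂)` is `s(1-s)·r₁` for `r₁ ≤ r₂`, which cancels the
factor `1/r₁`: the covariance depends only on the larger indices, so it equals the variance there. -/

section

variable {Ω : Type*} [MeasurableSpace Ω] {μ : Measure Ω}

lemma IsGaussianRV.memLp_two {Y : Ω → ℝ} (h : IsGaussianRV μ Y) : MemLp Y 2 μ := by
  obtain ⟨m, v, hmap⟩ := h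
  have hY : AEMeasurable Y μ := by
    by_contra hY
    rw [Measure.map_of_not_aemeasurable hY] at hmap
    exact IsProbabilityMeasure.ne_zero (gaussianReal m v) hmap.symm
  exact (memLp_map_measure_iff aestronglyMeasurable_id hY).1
    (hmap ▸ memLp_id_gaussianReal' 2 (by norm_num))

lemma integral_add_mul_add_of_integral_mul_eq_zero {X₁ X₂ Y₁ Y₂ : Ω → ℝ}
    (hX₁ : MemLp X₁ 2 μ) (hX₂ : MemLp X₂ 2 μ) (hY₁ : MemLp Y₁ 2 μ) (hY₂ : MemLp Y₂ 2 μ)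
    (h₁₂ : ∫ ω, X₁ ω * Y₂ ω ∂μ = 0) (h₂₁ : ∫ ω, X₂ ω * Y₁ ω ∂μ = 0) (a₁ b₁ a₂ b₂ : ℝ) :
    ∫ ω, (a₁ * X₁ ω + b₁ * Y₁ ω) * (a₂ * X₂ ω + b₂ * Y₂ ω) ∂μ
      = a₁ * a₂ * ∫ ω, X₁ ω * X₂ ω ∂μ + b₁ * b₂ * ∫ ω, Y₁ ω * Y₂ ω ∂μ := by
  have lin : ∀ {f g : Ω → ℝ}, MemLp f 2 μ → MemLp g 2 μ → ∀ c : ℝ,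
      Integrable (fun ω => c * (f ω * g ω)) μ :=
    fun hf hg c => (hf.integrable_mul hg).const_mul c
  have iXX := lin hX₁ hX₂ (a₁ * a₂)
  have iXY := lin hX₁ hY₂ (a₁ * b₂)
  have iYX := lin hX₂ hY₁ (b₁ * a₂)
  have iYY := lin hY₁ hY₂ (b₁ * b₂)
  have expand : ∀ ω, (a₁ * X₁ ω + b₁ * Y₁ ω) * (a₂ * X₂ ω + b₂ * Y₂ ω)
      = a₁ * a₂ * (X₁ ω * X₂ ω) + a₁ * b₂ * (X₁ ω * Y₂ ω)
        + (b₁ * a₂ * (X₂ ω * Y₁ ω) + b₁ * b₂ * (Y₁ ω * Y₂ ω)) := fun ω => by ring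
  simp only [expand]
  rw [integral_add (iXX.fun_add iXY) (iYX.fun_add iYY), integral_add iXX iXY,
    integral_add iYX iYY]
  simp only [integral_const_mul, h₁₂, h₂₁]
  ring

namespace IsKieferProcess

lemma memLp_two {K : ℝ → ℝ → Ω → ℝ} (h : IsKieferProcess μ K) (t r : ℝ) :
    MemLp (K t r) 2 μ := by
  simpa using (h.1 1 (fun _ => 1) (fun _ => (t, r))).memLp_two

lemma integral_mul_of_le {K : ℝ → ℝ → Ω → ℝ} (h : IsKieferProcess μ K) {t r₁ r₂ : ℝ}
    (ht : t ∈ Icc (0 : ℝ) 1) (hr₁ : 0 ≤ r₁) (hr : r₁ ≤ r₂) :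
    ∫ ω, K t r₁ ω * K t r₂ ω ∂μ = t * (1 - t) * r₁ := by
  rw [h.2.2 t t r₁ r₂ ht ht hr₁ (hr₁.trans hr), min_self, min_eq_left hr]
  ring

lemma integral_mul_eq_zero_of_indepFun {K₁ K₂ : ℝ → ℝ → Ω → ℝ}
    (h₁ : IsKieferProcess μ K₁) (h₂ : IsKieferProcess μ K₂)
    (hIndep : IndepFun (fun ω => fun p : ℝ × ℝ => K₁ p.1 p.2 ω)
      (fun ω => fun p : ℝ × ℝ => K₂ p.1 p.2 ω) μ)
    {s r : ℝ} (hs : s ∈ Icc (0 : ℝ) 1) (hr : 0 ≤ r) (t r' : ℝ) :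
    ∫ ω, K₁ s r ω * K₂ t r' ω ∂μ = 0 := by
  have hind : IndepFun (K₁ s r) (K₂ t r') μ :=
    hIndep.comp (measurable_pi_apply (s, r)) (measurable_pi_apply (t, r'))
  rw [hind.integral_fun_mul_eq_mul_integral (h₁.memLp_two s r).aestronglyMeasurable
    (h₂.memLp_two t r').aestronglyMeasurable, h₁.2.1 s r hs hr, zero_mul]

lemma integral_add_mul_add {K₁ K₂ : ℝ → ℝ → Ω → ℝ}
    (h₁ : IsKieferProcess μ K₁) (h₂ : IsKieferProcess μ K₂)
    (hIndep : IndepFun (fun ω => fun p : ℝ × ℝ => K₁ p.1 p.2 ω)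
      (fun ω => fun p : ℝ × ℝ => K₂ p.1 p.2 ω) μ)
    {s t r₁ r₂ r'₁ r'₂ : ℝ} (hs : s ∈ Icc (0 : ℝ) 1) (ht : t ∈ Icc (0 : ℝ) 1)
    (hr₁ : 0 ≤ r₁) (hr : r₁ ≤ r₂) (hr'₁ : 0 ≤ r'₁) (hr' : r'₁ ≤ r'₂) (a₁ b₁ a₂ b₂ : ℝ) :
    ∫ ω, (a₁ * K₁ s r₁ ω + b₁ * K₂ t r'₁ ω) * (a₂ * K₁ s r₂ ω + b₂ * K₂ t r'₂ ω) ∂μ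
      = a₁ * a₂ * (s * (1 - s) * r₁) + b₁ * b₂ * (t * (1 - t) * r'₁) := by
  rw [integral_add_mul_add_of_integral_mul_eq_zero (h₁.memLp_two s r₁) (h₁.memLp_two s r₂)
      (h₂.memLp_two t r'₁) (h₂.memLp_two t r'₂)
      (integral_mul_eq_zero_of_indepFun h₁ h₂ hIndep hs hr₁ t r'₂)
      (integral_mul_eq_zero_of_indepFun h₁ h₂ hIndep hs (hr₁.trans hr) t r'₁),
    h₁.integral_mul_of_le hs hr₁ hr, h₂.integral_mul_of_le ht hr'₁ hr']

end IsKieferProcess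

end

theorem seq_roc_limit_independent_increments_general
    {Ω : Type*} [MeasurableSpace Ω] (μ : Measure Ω)
    (K₁ K₂ : ℝ → ℝ → Ω → ℝ)
    (hK₁ : IsKieferProcess μ K₁) (hK₂ : IsKieferProcess μ K₂)
    (hIndep : IndepFun (fun ω => fun p : ℝ × ℝ => K₁ p.1 p.2 ω)
      (fun ω => fun p : ℝ × ℝ => K₂ p.1 p.2 ω) μ)
    (lam : ℝ) (hlam : 0 < lam)
    (ROC : ℝ → ℝ) (hROC : ∀ s ∈ Set.Icc (0 : ℝ) 1, ROC s ∈ Set.Icc (0 : ℝ) 1)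
    (g : ℝ → ℝ) (t : ℝ) (ht : t ∈ Set.Ioo (0 : ℝ) 1)
    (W : ℝ → ℝ → Ω → ℝ)
    (hW : ∀ rD rDb ω, W rD rDb ω
      = (1 / rD) * (K₁ (ROC t) rD ω + Real.sqrt lam * (rD / rDb) * g t * K₂ t rDb ω))
    (rD₁ rD₂ rDb₁ rDb₂ : ℝ)
    (hrD₁ : rD₁ ∈ Set.Ioc (0 : ℝ) 1) (hrD₂ : rD₂ ∈ Set.Ioc (0 : ℝ) 1)
    (hrDb₁ : rDb₁ ∈ Set.Ioc (0 : ℝ) 1) (hrDb₂ : rDb₂ ∈ Set.Ioc (0 : ℝ) 1)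
    (hrD : rD₁ ≤ rD₂) (hrDb : rDb₁ ≤ rDb₂) :
    (∫ ω, W rD₁ rDb₁ ω * W rD₂ rDb₂ ω ∂μ = ∫ ω, W rD₂ rDb₂ ω * W rD₂ rDb₂ ω ∂μ) ∧
    (∫ ω, W rD₂ rDb₂ ω * W rD₂ rDb₂ ω ∂μ
      = ROC t * (1 - ROC t) / rD₂ + lam * (g t) ^ 2 * (t * (1 - t)) / rDb₂) := by
  have htIcc : t ∈ Icc (0 : ℝ) 1 := Ioo_subset_Icc_self ht
  have hW' : ∀ {rD rDb : ℝ}, 0 < rD → 0 < rDb → ∀ ω,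
      W rD rDb ω = 1 / rD * K₁ (ROC t) rD ω + Real.sqrt lam * g t / rDb * K₂ t rDb ω := by
    intro rD rDb hrD hrDb ω
    rw [hW]
    field_simp
  have cov : ∀ {r₁ r₂ r'₁ r'₂ : ℝ}, 0 < r₁ → r₁ ≤ r₂ → 0 < r'₁ → r'₁ ≤ r'₂ →
      ∫ ω, W r₁ r'₁ ω * W r₂ r'₂ ω ∂μ
        = ROC t * (1 - ROC t) / r₂ + lam * (g t) ^ 2 * (t * (1 - t)) / r'₂ := by
    intro r₁ r₂ r'₁ r'₂ hr₁ hr hr'₁ hr'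
    simp only [hW' hr₁ hr'₁, hW' (hr₁.trans_le hr) (hr'₁.trans_le hr')]
    rw [hK₁.integral_add_mul_add hK₂ hIndep (hROC t htIcc) htIcc hr₁.le hr hr'₁.le hr']
    field_simp
    rw [Real.sq_sqrt hlam.le]
    ring
  have var := cov hrD₂.1 le_rfl hrDb₂.1 le_rfl
  exact ⟨(cov hrD₁.1 hrD hrDb₁.1 hrDb).trans var.symm, var⟩

/-- For independent Kiefer processes `K₁, K₂`, `λ > 0`, `ROC : [0,1] → [0,1]`, `g` and
fixed `t ∈ (0,1)`, the limiting process
`W(r_D, r_D̄) = (1/r_D)·[K₁(ROC(t), r_D) + √λ·(r_D/r_D̄)·g(t)·K₂(t, r_D̄)]` satisfies, for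
`r_{D,1} ≤ r_{D,2}` and `r_{D̄,1} ≤ r_{D̄,2}`,
`Cov(W(r_{D,1},r_{D̄,1}), W(r_{D,2},r_{D̄,2})) = Var(W(r_{D,2},r_{D̄,2}))
  = ROC(t)(1−ROC(t))/r_{D,2} + λ·g(t)²·t(1−t)/r_{D̄,2}`. -/
theorem seq_roc_limit_independent_increments
    {Ω : Type*} [MeasurableSpace Ω] (μ : Measure Ω) [IsProbabilityMeasure μ]
    (K₁ K₂ : ℝ → ℝ → Ω → ℝ)
    (hK₁ : IsKieferProcess μ K₁) (hK₂ : IsKieferProcess μ K₂)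
    (hIndep : IndepFun (fun ω => fun p : ℝ × ℝ => K₁ p.1 p.2 ω)
      (fun ω => fun p : ℝ × ℝ => K₂ p.1 p.2 ω) μ)
    (lam : ℝ) (hlam : 0 < lam)
    (ROC : ℝ → ℝ) (hROC : ∀ s ∈ Set.Icc (0 : ℝ) 1, ROC s ∈ Set.Icc (0 : ℝ) 1)
    (g : ℝ → ℝ) (t : ℝ) (ht : t ∈ Set.Ioo (0 : ℝ) 1)
    (W : ℝ → ℝ → Ω → ℝ)
    (hW : ∀ rD rDb ω, W rD rDb ω
      = (1 / rD) * (K₁ (ROC t) rD ω + Real.sqrt lam * (rD / rDb) * g t * K₂ t rDb ω))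
    (rD₁ rD₂ rDb₁ rDb₂ : ℝ)
    (hrD₁ : rD₁ ∈ Set.Ioc (0 : ℝ) 1) (hrD₂ : rD₂ ∈ Set.Ioc (0 : ℝ) 1)
    (hrDb₁ : rDb₁ ∈ Set.Ioc (0 : ℝ) 1) (hrDb₂ : rDb₂ ∈ Set.Ioc (0 : ℝ) 1)
    (hrD : rD₁ ≤ rD₂) (hrDb : rDb₁ ≤ rDb₂) :
    (∫ ω, W rD₁ rDb₁ ω * W rD₂ rDb₂ ω ∂μ = ∫ ω, W rD₂ rDb₂ ω * W rD₂ rDb₂ ω ∂μ) ∧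
    (∫ ω, W rD₂ rDb₂ ω * W rD₂ rDb₂ ω ∂μ
      = ROC t * (1 - ROC t) / rD₂ + lam * (g t) ^ 2 * (t * (1 - t)) / rDb₂) :=
  seq_roc_limit_independent_increments_general μ K₁ K₂ hK₁ hK₂ hIndep lam hlam ROC hROC g t ht W hW
    rD₁ rD₂ rDb₁ rDb₂ hrD₁ hrD₂ hrDb₁ hrDb₂ hrD hrDb
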